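/- Assume S satisfies identity (1). Let C ⊆ B, let e₁ ∈ E(S) ∪ {□}, and let t₁ ∈ β(P^C[e₁]). If t₁ is not left saturated, then there exists a letter c = (e,x,f) ∈ C such that for every v ∈ C* satisfying v·c ∈ T^C[e₁,f], one has t₁ ∉ t₁·β(v·c)·M. -/

import Mathlib

/-- The type of letters of the alphabet `B = (E(S) ∪ {□}) × M × (E(S) ∪ {□})`:
a guard is an element of `Option M`, where `none` plays the role of `□`. -/
abbrev BLetter (M : Type*) := Option M × M × Option M

/-- A guard is valid if it is `□` or an idempotent element of `S`. -/
def GuardOK {M : Type*} [Monoid M] (S : Set M) (g : Option M) : Prop :=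
  ∀ m : M, g = some m → m ∈ S ∧ m * m = m

/-- The set of letters of the alphabet `B`. -/
def Bset {M : Type*} [Monoid M] (S : Set M) : Set (BLetter M) :=
  {b | GuardOK S b.1 ∧ GuardOK S b.2.2}

/-- The value `β(b)` of a letter `b = (e,s,f)`: it is `e·s·f` where a `□` guard
is interpreted as `1`. This encodes the four cases `β((e,s,f)) = e·s·f`,
`β((□,s,f)) = s·f`, `β((e,s,□)) = e·s` and `β((□,s,□)) = s`. -/
def letterVal {M : Type*} [Monoid M] (b : BLetter M) : M :=
  b.1.getD 1 * b.2.1 * b.2.2.getD 1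

/-- The morphism `β : B* → M`. -/
def betaWord {M : Type*} [Monoid M] (u : List (BLetter M)) : M :=
  (u.map letterVal).prod

/-- A word `(e₀,s₀,f₀)⋯(e_n,s_n,f_n) ∈ B*` is pseudo well-formed when
`f_i = e_{i+1} ∈ E(S)` for every `i < n` (the empty word and one-letter words
are pseudo well-formed). -/
def PseudoWF {M : Type*} [Monoid M] (S : Set M) : List (BLetter M) → Prop
  | [] => True
  | [_] => True
  | b₁ :: b₂ :: rest =>
      (∃ g : M, g ∈ S ∧ g * g = g ∧ b₁.2.2 = some g ∧ b₂.1 = some g) ∧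
      PseudoWF S (b₂ :: rest)

/-- The left guard `e₀` of a word `(e₀,s₀,f₀)⋯(e_n,s_n,f_n)` (junk on `ε`). -/
def leftGuard {M : Type*} [Monoid M] (u : List (BLetter M)) : Option M :=
  (u.headD (none, 1, none)).1

/-- The right guard `f_n` of a word `(e₀,s₀,f₀)⋯(e_n,s_n,f_n)` (junk on `ε`). -/
def rightGuard {M : Type*} [Monoid M] (u : List (BLetter M)) : Option M :=
  (u.getLastD (none, 1, none)).2.2

/-- A word of `B*` is well-formed if it is nonempty, pseudo well-formed and both
its guards are `□`. -/
def WellFormed {M : Type*} [Monoid M] (S : Set M) (u : List (BLetter M)) : Prop :=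
  u ≠ [] ∧ PseudoWF S u ∧ leftGuard u = none ∧ rightGuard u = none

/-- `T^C[e,f]`: nonempty pseudo well-formed words over `C` with left guard `e` and
right guard `f`, together with `ε` when `e = f ∈ E(S)`. -/
def Tset {M : Type*} [Monoid M] (S : Set M) (C : Set (BLetter M)) (e f : Option M) :
    Set (List (BLetter M)) :=
  {u | (u ≠ [] ∧ (∀ b ∈ u, b ∈ C) ∧ PseudoWF S u ∧ leftGuard u = e ∧ rightGuard u = f)
    ∨ (u = [] ∧ e = f ∧ ∃ g : M, g ∈ S ∧ g * g = g ∧ e = some g)}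

/-- `P^C[e]`: `{ε}` if `e = □`, and otherwise `ε` together with all nonempty pseudo
well-formed words over `C` with right guard `e`. -/
def Pset {M : Type*} [Monoid M] (S : Set M) (C : Set (BLetter M)) (e : Option M) :
    Set (List (BLetter M)) :=
  {u | u = [] ∨ (e ≠ none ∧ u ≠ [] ∧ (∀ b ∈ u, b ∈ C) ∧ PseudoWF S u ∧ rightGuard u = e)}

/-- `S^C[f]`: `{ε}` if `f = □`, and otherwise `ε` together with all nonempty pseudo
well-formed words over `C` with left guard `f`. -/
def Sset {M : Type*} [Monoid M] (S : Set M) (C : Set (BLetter M)) (f : Option M) :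
    Set (List (BLetter M)) :=
  {u | u = [] ∨ (f ≠ none ∧ u ≠ [] ∧ (∀ b ∈ u, b ∈ C) ∧ PseudoWF S u ∧ leftGuard u = f)}

/-- `t₁` is left saturated (w.r.t. `C` and `e₁`) when for every `f ∈ E(S) ∪ {□}`
and every `u ∈ T^C[e₁,f]`, `t₁ ∈ t₁·β(u)·M`. -/
def LeftSaturated {M : Type*} [Monoid M] (S : Set M) (C : Set (BLetter M))
    (e₁ : Option M) (t₁ : M) : Prop :=
  ∀ f : Option M, GuardOK S f → ∀ u ∈ Tset S C e₁ f,
    ∃ z : M, t₁ = t₁ * betaWord u * z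

/-!
Let `u = v₀c` be a word of minimal length in some `T^C[e₁,f]` with `t₁ ∉ t₁·β(u)·M`; its last
letter `c = (e,x,f)` is the witness. Suppose `t₁ = t₁·β(vc)·z` and put `b = β(v)e`, so that
`t₁ = t₁·b·x·z`. Put `a = β(v₀)e`; minimality of `u` (or, when `v₀ = ε`, the right guard of the
word defining `t₁`) gives `t₁ = t₁·a·w`. Then `y = e(wb)e(xza)e` fixes `t₁·a` on the right, some
power `y^n` is idempotent, and identity (1) gives `y^n(xza)y^n = y^n`, whence
`t₁ = t₁·a·y^n·w = t₁·a·x·(z·a·y^n·w)`, contradicting the choice of `u`.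
-/

section Monoid

variable {M : Type*} [Monoid M]

def SatisfiesIdentityOne (S : Set M) : Prop :=
  ∀ s ∈ S, ∀ t ∈ S, ∀ e ∈ S, IsIdempotentElem e → ∀ n : ℕ, 1 ≤ n →
    IsIdempotentElem ((e * s * e * t * e) ^ n) →
    (e * s * e * t * e) ^ n * t * (e * s * e * t * e) ^ n = (e * s * e * t * e) ^ n

lemma exists_isIdempotentElem_pow [Finite M] (m : M) :
    ∃ n, 1 ≤ n ∧ IsIdempotentElem (m ^ n) := by
  obtain ⟨i, j, hne, hij⟩ := Finite.exists_ne_map_eq_of_infinite (fun k : ℕ => m ^ k)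
  wlog hlt : i < j generalizing i j
  · exact this j i hne.symm hij.symm (by omega)
  obtain ⟨p, rfl⟩ := Nat.exists_eq_add_of_lt hlt
  have hper : ∀ k, m ^ (i + (p + 1) * k) = m ^ i := by
    intro k
    induction k with
    | zero => simp
    | succ k ih =>
      rw [mul_add_one, ← add_assoc, pow_add, ih, ← pow_add, ← add_assoc]
      exact hij.symm
  set N := (p + 1) * (i + 1) with hN
  have hiN : i ≤ N := by nlinarith
  refine ⟨N, by nlinarith, ?_⟩
  calc m ^ N * m ^ N = m ^ (i + N) * m ^ (N - i) := by rw [← pow_add, ← pow_add]; congr 1; omega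
    _ = m ^ N := by rw [hN, hper, ← pow_add]; congr 1; omega

lemma SatisfiesIdentityOne.mul_mul_dvd [Finite M] {S : Set M} (hId : SatisfiesIdentityOne S)
    (hS : ∀ m n, ∀ s ∈ S, m * s * n ∈ S) {e a b x t : M} (heS : e ∈ S) (he : IsIdempotentElem e)
    (ha : a * e = a) (hb : b * e = b) (hx : e * x = x) (hta : t * a ∣ t)
    (htbx : t * (b * x) ∣ t) : t * (a * x) ∣ t := by
  obtain ⟨w, hw⟩ := hta
  obtain ⟨z, hz⟩ := htbx
  rw [← mul_assoc] at hz
  have hwb : w * b ∈ S := by simpa [mul_assoc, hb] using hS (w * b) 1 e heS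
  have hxza : x * z * a ∈ S := by simpa [← mul_assoc, hx] using hS 1 (x * z * a) e heS
  set y := e * (w * b) * e * (x * z * a) * e
  have hy : t * a * y = t * a := by
    have ha' : ∀ s, s * a * e = s * a := fun s => by rw [mul_assoc, ha]
    have hb' : ∀ s, s * b * e = s * b := fun s => by rw [mul_assoc, hb]
    simp only [y, ← mul_assoc, ha', hb']
    rw [← hw, ← hz]
  have hpow : ∀ n, t * a * y ^ n = t * a := by
    intro n
    induction n with
    | zero => simp
    | succ n ih => rw [pow_succ, ← mul_assoc, ih, hy]
  obtain ⟨n, hn, hidem⟩ := exists_isIdempotentElem_pow y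
  have hkey := hId (w * b) hwb (x * z * a) hxza e heS he n hn hidem
  refine ⟨z * a * y ^ n * w, ?_⟩
  calc t = t * a * y ^ n * w := by rw [hpow, ← hw]
    _ = t * a * (y ^ n * (x * z * a) * y ^ n) * w := by rw [hkey]
    _ = t * a * y ^ n * x * (z * a * y ^ n * w) := by simp only [mul_assoc]
    _ = t * (a * x) * (z * a * y ^ n * w) := by rw [hpow, mul_assoc t]

lemma mul_mul_mem_image_ne_nil {A : Type*} {α : List A → M}
    (hmul : ∀ u v, α (u ++ v) = α u * α v) (hsurj : Function.Surjective α) (m n : M) {s : M}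
    (hs : s ∈ {m : M | ∃ u : List A, u ≠ [] ∧ α u = m}) :
    m * s * n ∈ {m : M | ∃ u : List A, u ≠ [] ∧ α u = m} := by
  obtain ⟨u, hu, rfl⟩ := hs
  obtain ⟨um, rfl⟩ := hsurj m
  obtain ⟨un, rfl⟩ := hsurj n
  exact ⟨um ++ u ++ un, by simp [hu], by rw [hmul, hmul]⟩

end Monoid

section Words

variable {M : Type*} [Monoid M] {S : Set M}

@[simp]
lemma betaWord_nil : betaWord ([] : List (BLetter M)) = 1 := rfl

@[simp]
lemma betaWord_append (u v : List (BLetter M)) :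
    betaWord (u ++ v) = betaWord u * betaWord v := by
  simp [betaWord]

@[simp]
lemma betaWord_singleton (c : BLetter M) : betaWord [c] = letterVal c := by
  simp [betaWord]

@[simp]
lemma rightGuard_append_singleton (v : List (BLetter M)) (c : BLetter M) :
    rightGuard (v ++ [c]) = c.2.2 := by
  simp [rightGuard]

lemma leftGuard_append_singleton {v : List (BLetter M)} (c : BLetter M) (hv : v ≠ []) :
    leftGuard (v ++ [c]) = leftGuard v := by
  obtain ⟨b, v, rfl⟩ := List.exists_cons_of_ne_nil hv
  rfl

lemma mul_letterVal_of_fst_eq_some {c : BLetter M} {e : M} (hc : c.1 = some e)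
    (he : IsIdempotentElem e) : e * letterVal c = letterVal c := by
  simp [letterVal, hc, ← mul_assoc, he.eq]

lemma betaWord_mul_of_rightGuard_eq_some {v : List (BLetter M)} {g : M}
    (hv : rightGuard v = some g) (hg : IsIdempotentElem g) : betaWord v * g = betaWord v := by
  obtain rfl | ⟨w, c, rfl⟩ := v.eq_nil_or_concat'
  · simp [rightGuard] at hv
  · simp only [rightGuard_append_singleton] at hv
    simp [letterVal, hv, mul_assoc, hg.eq]

lemma PseudoWF.of_append_singleton :
    ∀ {v : List (BLetter M)} {c : BLetter M}, PseudoWF S (v ++ [c]) → PseudoWF S v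
  | [], _, _ => trivial
  | [_], _, _ => trivial
  | _ :: _ :: _, _, ⟨hjoin, h⟩ => ⟨hjoin, PseudoWF.of_append_singleton h⟩

lemma PseudoWF.rightGuard_eq_of_append_singleton :
    ∀ {v : List (BLetter M)} {c : BLetter M}, PseudoWF S (v ++ [c]) → v ≠ [] →
      ∃ g, rightGuard v = some g ∧ c.1 = some g
  | [], _, _, hv => absurd rfl hv
  | [_], _, ⟨⟨g, _, _, hb, hc⟩, _⟩, _ => ⟨g, hb, hc⟩
  | _ :: b :: v, _, ⟨_, h⟩, _ => by
    simpa [rightGuard, List.getLastD_cons] using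
      PseudoWF.rightGuard_eq_of_append_singleton h (List.cons_ne_nil b v)

lemma mem_Tset_of_ne_nil {C : Set (BLetter M)} {e f : Option M} {u : List (BLetter M)}
    (hu : u ≠ []) :
    u ∈ Tset S C e f ↔ (∀ b ∈ u, b ∈ C) ∧ PseudoWF S u ∧ leftGuard u = e ∧ rightGuard u = f := by
  simp [Tset, hu]

lemma dvd_betaWord_append_singleton_of_dvd [Finite M]
    (hId : SatisfiesIdentityOne S) (hS : ∀ m n, ∀ s ∈ S, m * s * n ∈ S)
    {C : Set (BLetter M)} {e₁ : Option M} {t₁ : M} (ht₁ : ∃ p ∈ Pset S C e₁, betaWord p = t₁)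
    {c : BLetter M} (hc : c ∈ Bset S) {v₀ v : List (BLetter M)} (hv₀ : PseudoWF S (v₀ ++ [c]))
    (hv₀e₁ : leftGuard (v₀ ++ [c]) = e₁) (hmin : v₀ ≠ [] → t₁ * betaWord v₀ ∣ t₁)
    (hv : PseudoWF S (v ++ [c])) (hvt : t₁ * betaWord (v ++ [c]) ∣ t₁) :
    t₁ * betaWord (v₀ ++ [c]) ∣ t₁ := by
  rcases hc1 : c.1 with _ | e
  · have hnil : ∀ {w}, PseudoWF S (w ++ [c]) → w = [] := fun hw => by
      by_contra hne
      obtain ⟨g, -, hg⟩ := hw.rightGuard_eq_of_append_singleton hne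
      simp [hc1] at hg
    obtain rfl := hnil hv₀
    obtain rfl := hnil hv
    exact hvt
  obtain ⟨heS, he⟩ : e ∈ S ∧ IsIdempotentElem e := hc.1 e hc1
  have hx := mul_letterVal_of_fst_eq_some hc1 he
  have hβ : ∀ w, betaWord (w ++ [c]) = betaWord w * e * letterVal c := fun w => by
    rw [betaWord_append, betaWord_singleton, mul_assoc, hx]
  rw [hβ] at hvt ⊢
  have hguard : ∀ w, betaWord w * e * e = betaWord w * e := fun w => by rw [mul_assoc, he.eq]
  refine hId.mul_mul_dvd hS heS he (hguard v₀) (hguard v) hx ?_ hvt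
  rcases eq_or_ne v₀ [] with rfl | hne
  · obtain ⟨p, hp | ⟨-, hpne, -, -, hpe⟩, rfl⟩ := ht₁
    · -- `t₁ = β(ε) = 1`, and a finite monoid is Dedekind-finite
      subst hp
      obtain ⟨z, hz⟩ := hvt
      have h1 : betaWord v * (e * (letterVal c * z)) = 1 := by simpa [mul_assoc] using hz.symm
      exact ⟨letterVal c * z * betaWord v, by simpa [mul_assoc] using (mul_eq_one_symm h1).symm⟩
    · have he₁ : e₁ = some e := by simpa [leftGuard, hc1] using hv₀e₁.symm
      exact ⟨1, by rw [betaWord_nil, one_mul, mul_one,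
        betaWord_mul_of_rightGuard_eq_some (hpe.trans he₁) he]⟩
  · obtain ⟨g, hg, hcg⟩ := hv₀.rightGuard_eq_of_append_singleton hne
    obtain rfl : e = g := Option.some.inj (hc1.symm.trans hcg)
    rw [betaWord_mul_of_rightGuard_eq_some hg he]
    exact hmin hne

end Words

theorem stmt_11_general {A M : Type*} [Fintype M] [Monoid M]
    (α : List A → M)
    (hαmul : ∀ u v : List A, α (u ++ v) = α u * α v)
    (hαsurj : Function.Surjective α)
    (S : Set M) (hS : S = {m : M | ∃ u : List A, u ≠ [] ∧ α u = m})
    (hId : ∀ s ∈ S, ∀ t ∈ S, ∀ e ∈ S, e * e = e → ∀ n : ℕ, 1 ≤ n →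
      (e * s * e * t * e) ^ n * (e * s * e * t * e) ^ n = (e * s * e * t * e) ^ n →
      (e * s * e * t * e) ^ n * t * (e * s * e * t * e) ^ n = (e * s * e * t * e) ^ n)
    (C : Set (BLetter M)) (hC : C ⊆ Bset S)
    (e₁ : Option M)
    (t₁ : M) (ht₁ : ∃ p ∈ Pset S C e₁, betaWord p = t₁)
    (hnotsat : ¬ LeftSaturated S C e₁ t₁) :
    ∃ c ∈ C, ∀ v : List (BLetter M), (∀ b ∈ v, b ∈ C) →
      v ++ [c] ∈ Tset S C e₁ c.2.2 →
      ¬ ∃ z : M, t₁ = t₁ * betaWord (v ++ [c]) * z := by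
  have hideal : ∀ m n, ∀ s ∈ S, m * s * n ∈ S := fun m n _ hs => by
    subst hS
    exact mul_mul_mem_image_ne_nil hαmul hαsurj m n hs
  simp only [LeftSaturated, not_forall] at hnotsat
  obtain ⟨f, -, u, huT, hu⟩ := hnotsat
  obtain ⟨u, ⟨f, huT, hu⟩, hmin⟩ := (measure List.length).wf.has_min
    {u | ∃ f, u ∈ Tset S C e₁ f ∧ ¬ t₁ * betaWord u ∣ t₁} ⟨u, f, huT, hu⟩
  obtain ⟨v₀, c, rfl⟩ := u.eq_nil_or_concat'.resolve_left (by rintro rfl; exact hu ⟨1, by simp⟩)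
  obtain ⟨huC, hv₀, hv₀e₁, -⟩ := (mem_Tset_of_ne_nil (by simp)).1 huT
  have hcC : c ∈ C := huC c (by simp)
  refine ⟨c, hcC, fun v _ hvT hvt => hu ?_⟩
  refine dvd_betaWord_append_singleton_of_dvd hId hideal ht₁ (hC hcC) hv₀ hv₀e₁ (fun hne => ?_)
    ((mem_Tset_of_ne_nil (by simp)).1 hvT).2.1 hvt
  by_contra hbad
  obtain ⟨g, hg, -⟩ := hv₀.rightGuard_eq_of_append_singleton hne
  have hv₀T : v₀ ∈ Tset S C e₁ (some g) := (mem_Tset_of_ne_nil hne).2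
    ⟨fun b hb => huC b (by simp [hb]), hv₀.of_append_singleton,
      by rw [← hv₀e₁, leftGuard_append_singleton c hne], hg⟩
  exact hmin v₀ ⟨some g, hv₀T, hbad⟩ (show v₀.length < (v₀ ++ [c]).length by simp)

/-- Assume `S` satisfies identity (1). Let `C ⊆ B`, `e₁ ∈ E(S) ∪ {□}` and
`t₁ ∈ β(P^C[e₁])`. If `t₁` is not left saturated, then there exists a letter
`c = (e,x,f) ∈ C` such that for every `v ∈ C*` satisfying `v·c ∈ T^C[e₁,f]`,
one has `t₁ ∉ t₁·β(v·c)·M`. -/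
theorem stmt_11 {A M : Type*} [Fintype A] [Fintype M] [Monoid M]
    (α : List A → M) (hα1 : α [] = 1)
    (hαmul : ∀ u v : List A, α (u ++ v) = α u * α v)
    (hαsurj : Function.Surjective α)
    (S : Set M) (hS : S = {m : M | ∃ u : List A, u ≠ [] ∧ α u = m})
    (hId : ∀ s ∈ S, ∀ t ∈ S, ∀ e ∈ S, e * e = e → ∀ n : ℕ, 1 ≤ n →
      (e * s * e * t * e) ^ n * (e * s * e * t * e) ^ n = (e * s * e * t * e) ^ n →
      (e * s * e * t * e) ^ n * t * (e * s * e * t * e) ^ n = (e * s * e * t * e) ^ n)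
    (C : Set (BLetter M)) (hC : C ⊆ Bset S)
    (e₁ : Option M) (he₁ : GuardOK S e₁)
    (t₁ : M) (ht₁ : ∃ p ∈ Pset S C e₁, betaWord p = t₁)
    (hnotsat : ¬ LeftSaturated S C e₁ t₁) :
    ∃ c ∈ C, ∀ v : List (BLetter M), (∀ b ∈ v, b ∈ C) →
      v ++ [c] ∈ Tset S C e₁ c.2.2 →
      ¬ ∃ z : M, t₁ = t₁ * betaWord (v ++ [c]) * z :=
  stmt_11_general α hαmul hαsurj S hS hId C hC e₁ t₁ ht₁ hnotsat
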